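/- If (Γ1;Δ1) ⇒τ (Γ2;Δ2), then (Γ2;Δ2) ≼_s (Γ1;Δ1): any state obtained by weak silent transitions is simulated by (i.e., below in the simulation preorder) the original state. -/

import Mathlib

/-- Formulas of the linear-logic fragment: atoms, 1, ⊗, ⊤, &, atomic-antecedent ⊸, !. -/
inductive Formula : Type where
  | atom : ℕ → Formula
  | one : Formula
  | tensor : Formula → Formula → Formula
  | top : Formula
  | with_ : Formula → Formula → Formula
  | limp : ℕ → Formula → Formula
  | bang : Formula → Formula
deriving DecidableEq

/-- Contexts are finite multisets of formulas. -/
abbrev Ctx : Type := Multiset Formula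

/-- A process state (Γ;Δ): unrestricted context Γ and linear context Δ. -/
abbrev State : Type := Ctx × Ctx

/-- Composition of states: ((Γ1;Δ1),(Γ2;Δ2)) = (Γ1,Γ2; Δ1,Δ2). -/
def State.comp (s t : State) : State := (s.1 + t.1, s.2 + t.2)

/-- DILL derivability Γ;Δ ⊢ A. -/
inductive Derives : Ctx → Ctx → Formula → Prop where
  | init (Γ : Ctx) (a : ℕ) : Derives Γ {Formula.atom a} (Formula.atom a)
  | clone {Γ Δ : Ctx} {A C : Formula} :
      Derives (A ::ₘ Γ) (A ::ₘ Δ) C → Derives (A ::ₘ Γ) Δ C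
  | tensorR {Γ Δ₁ Δ₂ : Ctx} {A B : Formula} :
      Derives Γ Δ₁ A → Derives Γ Δ₂ B → Derives Γ (Δ₁ + Δ₂) (Formula.tensor A B)
  | tensorL {Γ Δ : Ctx} {A B C : Formula} :
      Derives Γ (A ::ₘ B ::ₘ Δ) C → Derives Γ (Formula.tensor A B ::ₘ Δ) C
  | oneR (Γ : Ctx) : Derives Γ 0 Formula.one
  | oneL {Γ Δ : Ctx} {C : Formula} :
      Derives Γ Δ C → Derives Γ (Formula.one ::ₘ Δ) C
  | withR {Γ Δ : Ctx} {A B : Formula} :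
      Derives Γ Δ A → Derives Γ Δ B → Derives Γ Δ (Formula.with_ A B)
  | withL₁ {Γ Δ : Ctx} {A₁ A₂ C : Formula} :
      Derives Γ (A₁ ::ₘ Δ) C → Derives Γ (Formula.with_ A₁ A₂ ::ₘ Δ) C
  | withL₂ {Γ Δ : Ctx} {A₁ A₂ C : Formula} :
      Derives Γ (A₂ ::ₘ Δ) C → Derives Γ (Formula.with_ A₁ A₂ ::ₘ Δ) C
  | topR (Γ Δ : Ctx) : Derives Γ Δ Formula.top
  | limpR {Γ Δ : Ctx} {a : ℕ} {B : Formula} :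
      Derives Γ (Formula.atom a ::ₘ Δ) B → Derives Γ Δ (Formula.limp a B)
  | limpL {Γ Δ₁ Δ₂ : Ctx} {a : ℕ} {B C : Formula} :
      Derives Γ Δ₁ (Formula.atom a) → Derives Γ (B ::ₘ Δ₂) C →
      Derives Γ (Formula.limp a B ::ₘ (Δ₁ + Δ₂)) C
  | bangR {Γ : Ctx} {A : Formula} :
      Derives Γ 0 A → Derives Γ 0 (Formula.bang A)
  | bangL {Γ Δ : Ctx} {A C : Formula} :
      Derives (A ::ₘ Γ) Δ C → Derives Γ (Formula.bang A ::ₘ Δ) C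

/-- The logical preorder (Γ1;Δ1) ≼ₗ (Γ2;Δ2). -/
def LogicalPre (s t : State) : Prop :=
  ∀ (Γ' Δ' : Ctx) (C : Formula),
    Derives (Γ' + s.1) (Δ' + s.2) C → Derives (Γ' + t.1) (Δ' + t.2) C

/-- The reduction relation ⇝ on process states. -/
inductive Red : State → State → Prop where
  | tensor (Γ Δ : Ctx) (A B : Formula) :
      Red (Γ, Formula.tensor A B ::ₘ Δ) (Γ, A ::ₘ B ::ₘ Δ)
  | one (Γ Δ : Ctx) :
      Red (Γ, Formula.one ::ₘ Δ) (Γ, Δ)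
  | with₁ (Γ Δ : Ctx) (A₁ A₂ : Formula) :
      Red (Γ, Formula.with_ A₁ A₂ ::ₘ Δ) (Γ, A₁ ::ₘ Δ)
  | with₂ (Γ Δ : Ctx) (A₁ A₂ : Formula) :
      Red (Γ, Formula.with_ A₁ A₂ ::ₘ Δ) (Γ, A₂ ::ₘ Δ)
  | comm (Γ Δ : Ctx) (a : ℕ) (B : Formula) :
      Red (Γ, Formula.atom a ::ₘ Formula.limp a B ::ₘ Δ) (Γ, B ::ₘ Δ)
  | bang (Γ Δ : Ctx) (A : Formula) :
      Red (Γ, Formula.bang A ::ₘ Δ) (A ::ₘ Γ, Δ)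
  | clone (Γ Δ : Ctx) (A : Formula) :
      Red (A ::ₘ Γ, Δ) (A ::ₘ Γ, A ::ₘ Δ)

/-- ⇝*, the reflexive-transitive closure of reduction. -/
def RedStar : State → State → Prop := Relation.ReflTransGen Red

/-- Labels of the LTS: τ, send !a, receive ?a. -/
inductive Label : Type where
  | tau : Label
  | send : ℕ → Label
  | recv : ℕ → Label
deriving DecidableEq

/-- The labeled transition system on states. -/
inductive Step : State → Label → State → Prop where
  | send (Γ Δ : Ctx) (a : ℕ) :
      Step (Γ, Formula.atom a ::ₘ Δ) (Label.send a) (Γ, Δ)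
  | recv (Γ Δ : Ctx) (a : ℕ) (B : Formula) :
      Step (Γ, Formula.limp a B ::ₘ Δ) (Label.recv a) (Γ, B ::ₘ Δ)
  | comm {s₁ s₁' s₂ s₂' : State} {a : ℕ} :
      Step s₁ (Label.send a) s₁' → Step s₂ (Label.recv a) s₂' →
      Step (State.comp s₁ s₂) Label.tau (State.comp s₁' s₂')
  | tensor (Γ Δ : Ctx) (A B : Formula) :
      Step (Γ, Formula.tensor A B ::ₘ Δ) Label.tau (Γ, A ::ₘ B ::ₘ Δ)
  | one (Γ Δ : Ctx) :
      Step (Γ, Formula.one ::ₘ Δ) Label.tau (Γ, Δ)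
  | with₁ (Γ Δ : Ctx) (A₁ A₂ : Formula) :
      Step (Γ, Formula.with_ A₁ A₂ ::ₘ Δ) Label.tau (Γ, A₁ ::ₘ Δ)
  | with₂ (Γ Δ : Ctx) (A₁ A₂ : Formula) :
      Step (Γ, Formula.with_ A₁ A₂ ::ₘ Δ) Label.tau (Γ, A₂ ::ₘ Δ)
  | bang (Γ Δ : Ctx) (A : Formula) :
      Step (Γ, Formula.bang A ::ₘ Δ) Label.tau (A ::ₘ Γ, Δ)
  | clone (Γ Δ : Ctx) (A : Formula) :
      Step (A ::ₘ Γ, Δ) Label.tau (A ::ₘ Γ, A ::ₘ Δ)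

/-- ⇒τ, the reflexive-transitive closure of —τ→. -/
def WeakTau : State → State → Prop :=
  Relation.ReflTransGen (fun s t => Step s Label.tau t)

/-- Weak transition ⇒β: for β = τ it is ⇒τ, otherwise ⇒τ—β→⇒τ. -/
def WeakStep (s : State) (β : Label) (t : State) : Prop :=
  match β with
  | Label.tau => WeakTau s t
  | _ => ∃ u v, WeakTau s u ∧ Step u β v ∧ WeakTau v t

/-- A label is a "non-receive" label α (i.e., τ or a send). -/
def Label.isNonRecv : Label → Prop
  | Label.recv _ => False
  | _ => True

/-- A relation on states is a simulation. -/
def IsSimulation (R : State → State → Prop) : Prop :=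
  ∀ s t, R s t →
    (s.2 = 0 → ∃ Γ₂' : Ctx, WeakTau t (Γ₂', 0) ∧ R (s.1, 0) (Γ₂', 0)) ∧
    (∀ s₁ s₂ : State, s = State.comp s₁ s₂ →
      ∃ t₁ t₂ : State, WeakTau t (State.comp t₁ t₂) ∧ R s₁ t₁ ∧ R s₂ t₂) ∧
    (∀ (α : Label) (s' : State), α.isNonRecv → Step s α s' →
      ∃ t', WeakStep t α t' ∧ R s' t') ∧
    (∀ (a : ℕ) (s' : State), Step s (Label.recv a) s' →
      ∃ t', WeakTau (t.1, Formula.atom a ::ₘ t.2) t' ∧ R s' t')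

/-- The simulation preorder ≼ₛ. -/
def SimPre (s t : State) : Prop :=
  ∃ R : State → State → Prop, IsSimulation R ∧ R s t

/-- Strong barb: (Γ;Δ)↓a. -/
def Barb (s : State) (a : ℕ) : Prop := Formula.atom a ∈ s.2

/-- Weak barb: (Γ;Δ)⇓a. -/
def WeakBarb (s : State) (a : ℕ) : Prop := ∃ t, RedStar s t ∧ Barb t a

def BarbPreserving (R : State → State → Prop) : Prop :=
  ∀ s t a, R s t → Barb s a → WeakBarb t a

def ReductionClosed (R : State → State → Prop) : Prop :=
  ∀ s t s', R s t → Red s s' → ∃ t', RedStar t t' ∧ R s' t'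

def Compositional (R : State → State → Prop) : Prop :=
  ∀ s t u, R s t → R (State.comp s u) (State.comp t u)

def PartitionPreserving (R : State → State → Prop) : Prop :=
  ∀ s t, R s t →
    (s.2 = 0 → ∃ Γ₂' : Ctx, RedStar t (Γ₂', 0) ∧ R (s.1, 0) (Γ₂', 0)) ∧
    (∀ s₁ s₂ : State, s = State.comp s₁ s₂ →
      ∃ t₁ t₂ : State, RedStar t (State.comp t₁ t₂) ∧ R s₁ t₁ ∧ R s₂ t₂)

/-- The contextual preorder ≼_c: the largest barb-preserving, reduction-closed,
compositional, partition-preserving relation on states. -/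
def CtxPre (s t : State) : Prop :=
  ∃ R : State → State → Prop,
    BarbPreserving R ∧ ReductionClosed R ∧ Compositional R ∧ PartitionPreserving R ∧ R s t

/-- ⊗Δ: the ⊗-conjunction of all formulas in Δ (1 if Δ is empty). -/
noncomputable def bigTensor (Δ : Ctx) : Formula :=
  Δ.toList.foldr Formula.tensor Formula.one

/-- !Γ: prefix every formula of Γ with !. -/
def bangCtx (Γ : Ctx) : Ctx := Γ.map Formula.bang

/-!
Take the relation `u R v :↔ v ⇒τ u`. It is a simulation because whatever `u` does, `v` can
do by first running the silent steps to `u` and then copying `u`: partitions and empty linear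
contexts are matched at `u` itself, and a `τ`/`!a` step by a `τ`/`!a` weak step. For a receive
`u —?a→ u'`, the atom `a` added to `v` is carried along `v ⇒τ u` and then consumed by `u` in a
`τ` communication with the sender `(·; a)`.
-/

theorem Step.cons_linear {s s' : State} {β : Label} (A : Formula) (h : Step s β s') :
    Step (s.1, A ::ₘ s.2) β (s'.1, A ::ₘ s'.2) := by
  induction h with
  | comm h₁ _ _ ih₂ =>
    simpa only [State.comp, Multiset.add_cons] using Step.comm h₁ ih₂
  | send Γ Δ a => simpa only [Multiset.cons_swap] using Step.send Γ (A ::ₘ Δ) a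
  | recv Γ Δ a B => simpa only [Multiset.cons_swap] using Step.recv Γ (A ::ₘ Δ) a B
  | tensor Γ Δ B C => simpa only [Multiset.cons_swap] using Step.tensor Γ (A ::ₘ Δ) B C
  | one Γ Δ => simpa only [Multiset.cons_swap] using Step.one Γ (A ::ₘ Δ)
  | with₁ Γ Δ B C => simpa only [Multiset.cons_swap] using Step.with₁ Γ (A ::ₘ Δ) B C
  | with₂ Γ Δ B C => simpa only [Multiset.cons_swap] using Step.with₂ Γ (A ::ₘ Δ) B C
  | bang Γ Δ B => simpa only [Multiset.cons_swap] using Step.bang Γ (A ::ₘ Δ) B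
  | clone Γ Δ B => simpa only [Multiset.cons_swap] using Step.clone Γ (A ::ₘ Δ) B

theorem WeakTau.cons_linear {s t : State} (A : Formula) (h : WeakTau s t) :
    WeakTau (s.1, A ::ₘ s.2) (t.1, A ::ₘ t.2) := by
  induction h with
  | refl => exact .refl
  | tail _ hstep ih => exact ih.tail (hstep.cons_linear A)

theorem Step.tau_of_recv {s s' : State} {a : ℕ} (h : Step s (Label.recv a) s') :
    Step (s.1, Formula.atom a ::ₘ s.2) Label.tau s' := by
  simpa [State.comp] using Step.comm (Step.send 0 0 a) h

theorem WeakTau.weakStep_of_step {s u t : State} {β : Label} (hsu : WeakTau s u)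
    (hut : Step u β t) : WeakStep s β t := by
  cases β with
  | tau => exact hsu.tail hut
  | send _ | recv _ => exact ⟨u, t, hsu, hut, .refl⟩

theorem isSimulation_flip_weakTau : IsSimulation (flip WeakTau) :=
  fun u _ hvu => ⟨fun hu => ⟨u.1, hu ▸ hvu, .refl⟩,
    fun s₁ s₂ hu => ⟨s₁, s₂, hu ▸ hvu, .refl, .refl⟩,
    fun _ u' _ hstep => ⟨u', hvu.weakStep_of_step hstep, .refl⟩,
    fun a u' hstep => ⟨u', (hvu.cons_linear (Formula.atom a)).tail hstep.tau_of_recv, .refl⟩⟩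

/-- if (Γ1;Δ1) ⇒τ (Γ2;Δ2) then (Γ2;Δ2) ≼ₛ (Γ1;Δ1). -/
theorem weakTau_simPre (s t : State) (h : WeakTau s t) :
    SimPre t s :=
  ⟨flip WeakTau, isSimulation_flip_weakTau, h⟩
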